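/- arXiv:1706.00044 — 3 statements merged into one kernel-verified Lean document; each statement's English description precedes it below -/
import Mathlib

section
/- Let X be a separable metric space with its Borel σ-algebra, let f : X → X be a Borel measurable map, and let μ be a Borel probability measure that is ergodic for f. If μ has an atom (i.e., μ({x}) > 0 for some x ∈ X), then there exist a natural number k ≥ 1 and a point x ∈ X with f^k(x) = x such that μ = (1/k) · Σ_{i=0}^{k−1} δ_{f^i(x)}; in particular every atom of μ has the same weight 1/k and μ is supported on a single periodic orbit of f consisting of exactly k points. -/
/-!
By Poincaré recurrence an atom `x` returns to itself, so it is periodic. Since `{y} ⊆ f⁻¹' {f y}`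
and `f` preserves `μ`, the mass `μ {f^[n] x}` is nondecreasing in `n`; being periodic, it is
constant on the orbit. The orbit is a forward-invariant set of positive measure, so by ergodicity
it carries all of `μ`, and its `k` points share the total mass `1` equally.
-/

open MeasureTheory Function

namespace MeasureTheory

variable {α : Type*} [MeasurableSpace α] [MeasurableSingletonClass α] {μ : Measure α}

theorem Measure.eq_sum_smul_dirac_of_measure_compl_eq_zero (S : Finset α)
    (hS : μ (↑S)ᶜ = 0) : μ = ∑ a ∈ S, μ {a} • Measure.dirac a := by
  classical
  ext s hs
  calc μ s = μ (s ∩ S) := (measure_inter_conull hS).symm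
    _ = ∑ a ∈ S.filter (· ∈ s), μ {a} := by
      rw [sum_measure_singleton, Finset.coe_filter]; congr 1; ext; simp [and_comm]
    _ = _ := by
      simp [Measure.dirac_apply' _ hs, Finset.sum_filter, Set.indicator_apply]

namespace MeasurePreserving

variable {f : α → α} (hf : MeasurePreserving f μ μ)
include hf

theorem measure_singleton_le_apply (x : α) : μ {x} ≤ μ {f x} :=
  calc μ {x} ≤ μ (f ⁻¹' {f x}) := measure_mono fun _ hy => congrArg f hy
    _ = μ {f x} := hf.measure_preimage (measurableSet_singleton _).nullMeasurableSet

theorem measure_singleton_iterate {x : α} (hx : x ∈ periodicPts f) (n : ℕ) :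
    μ {f^[n] x} = μ {x} := by
  have hmono : Monotone fun n => μ {f^[n] x} := monotone_nat_of_le_succ fun n => by
    simpa only [iterate_succ_apply'] using hf.measure_singleton_le_apply (f^[n] x)
  obtain ⟨p, hp, hpx⟩ := hx
  have hnp : f^[n * p] x = x := (hpx.const_mul n).eq
  refine le_antisymm ?_ (hmono n.zero_le)
  simpa only [hnp] using hmono (Nat.le_mul_of_pos_right n hp)

theorem mem_periodicPts_of_measure_singleton_ne_zero [IsFiniteMeasure μ] {x : α}
    (hx : μ {x} ≠ 0) : x ∈ periodicPts f := by
  obtain ⟨_, rfl, m, hm, hmx⟩ :=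
    hf.exists_mem_iterate_mem (measurableSet_singleton x).nullMeasurableSet hx
  exact mk_mem_periodicPts (Nat.pos_of_ne_zero hm) hmx

end MeasurePreserving

theorem Ergodic.measure_compl_periodicOrbit_eq_zero [DecidableEq α] [IsFiniteMeasure μ]
    {f : α → α} (hf : Ergodic f μ) {x : α} (hx : μ {x} ≠ 0) :
    μ (↑((Finset.range (minimalPeriod f x)).image (f^[·] x)))ᶜ = 0 := by
  have hk := minimalPeriod_pos_of_mem_periodicPts <|
    hf.toMeasurePreserving.mem_periodicPts_of_measure_singleton_ne_zero hx
  set S := (Finset.range (minimalPeriod f x)).image (f^[·] x)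
  have hxS : x ∈ S := Finset.mem_image.2 ⟨0, Finset.mem_range.2 hk, rfl⟩
  have hmaps : f '' S ⊆ S := by
    rintro _ ⟨_, hy, rfl⟩
    obtain ⟨i, -, rfl⟩ := Finset.mem_image.1 hy
    refine Finset.mem_image.2
      ⟨(i + 1) % minimalPeriod f x, Finset.mem_range.2 (Nat.mod_lt _ hk), ?_⟩
    simp only [iterate_mod_minimalPeriod_eq, iterate_succ_apply']
  rcases hf.ae_empty_or_univ_of_image_ae_le' S.measurableSet.nullMeasurableSet
    hmaps.eventuallyLE (measure_ne_top μ _) with h | h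
  · exact absurd (measure_mono_null (Set.singleton_subset_iff.2 hxS) (ae_eq_empty.1 h)) hx
  · exact ae_eq_univ.1 h

end MeasureTheory

theorem stmt_2_general
    {X : Type*} [MetricSpace X]
    [MeasurableSpace X] [BorelSpace X]
    (f : X → X) (μ : Measure X) [IsProbabilityMeasure μ]
    (herg : Ergodic f μ)
    (hatom : ∃ x : X, 0 < μ {x}) :
    ∃ (k : ℕ) (x : X), 1 ≤ k ∧ f^[k] x = x ∧
      (∀ i j : ℕ, i < k → j < k → f^[i] x = f^[j] x → i = j) ∧
      μ = (k : ENNReal)⁻¹ • ∑ i ∈ Finset.range k, Measure.dirac (f^[i] x) := by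
  classical
  obtain ⟨x, hx⟩ := hatom
  have hmp := herg.toMeasurePreserving
  have hper := hmp.mem_periodicPts_of_measure_singleton_ne_zero hx.ne'
  set k := minimalPeriod f x
  have hinj : Set.InjOn (f^[·] x) (Finset.range k) := by
    simpa only [Finset.coe_range] using iterate_injOn_Iio_minimalPeriod
  have hμ : μ = μ {x} • ∑ i ∈ Finset.range k, Measure.dirac (f^[i] x) := by
    conv_lhs => rw [Measure.eq_sum_smul_dirac_of_measure_compl_eq_zero (μ := μ) _
      (herg.measure_compl_periodicOrbit_eq_zero hx.ne')]
    rw [Finset.sum_image hinj, Finset.smul_sum]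
    simp only [hmp.measure_singleton_iterate hper]
  have hc : μ {x} = (k : ENNReal)⁻¹ := by
    have hmass : μ {x} * k = 1 := by simpa using (congrArg (· Set.univ) hμ).symm
    exact ENNReal.eq_inv_of_mul_eq_one_left hmass
  exact ⟨k, x, minimalPeriod_pos_of_mem_periodicPts hper, iterate_minimalPeriod,
    fun _ _ hi hj h => iterate_injOn_Iio_minimalPeriod hi hj h, hc ▸ hμ⟩

/-- The atomic case: an ergodic measure with an atom is uniformly distributed on a
single periodic orbit consisting of exactly `k` points, each of weight `1/k`. -/
theorem stmt_2
    {X : Type*} [MetricSpace X] [TopologicalSpace.SeparableSpace X]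
    [MeasurableSpace X] [BorelSpace X]
    (f : X → X) (μ : Measure X) [IsProbabilityMeasure μ]
    (herg : Ergodic f μ)
    (hatom : ∃ x : X, 0 < μ {x}) :
    ∃ (k : ℕ) (x : X), 1 ≤ k ∧ f^[k] x = x ∧
      (∀ i j : ℕ, i < k → j < k → f^[i] x = f^[j] x → i = j) ∧
      μ = (k : ENNReal)⁻¹ • ∑ i ∈ Finset.range k, Measure.dirac (f^[i] x) :=
  stmt_2_general f μ herg hatom
end

section
/- Let X be a compact metric space, let φ : ℝ × X → X be a continuous flow, and let x ↦ κ_x be a measurable family of finite Borel measures on X (i.e., for every Borel set W ⊆ X the map x ↦ κ_x(W) is measurable). Then for every r > 0 the map x ↦ κ_x(φ([−r,r] × {x})) is Borel measurable. -/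
open MeasureTheory Set

/-- Measurability of the measure of orbit balls: for a measurable family of finite
Borel measures `κ` and a continuous flow `φ` on a compact metric space, the map
`x ↦ κ_x(φ([-r,r] × {x}))` is measurable for every `r > 0`. -/
theorem stmt_3
    {X : Type*} [MetricSpace X] [CompactSpace X]
    [MeasurableSpace X] [BorelSpace X]
    (φ : ℝ × X → X) (hφ : Continuous φ)
    (h0 : ∀ x : X, φ (0, x) = x)
    (hadd : ∀ (s t : ℝ) (x : X), φ (s + t, x) = φ (s, φ (t, x)))
    (κ : X → Measure X) (hfin : ∀ x, IsFiniteMeasure (κ x))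
    (hmeas : ∀ W : Set X, MeasurableSet W → Measurable fun x => κ x W)
    (r : ℝ) (hr : 0 < r) :
    Measurable fun x => κ x ((fun t : ℝ => φ (t, x)) '' Set.Icc (-r) r) := by
  -- package κ as a kernel
  have hκ : Measurable κ := Measure.measurable_of_measurable_coe κ hmeas
  set K : ProbabilityTheory.Kernel X X := ⟨κ, hκ⟩ with hK
  -- the "orbit graph" set
  set t : Set (X × X) := (fun q : ℝ × X => (q.2, φ q)) '' (Set.Icc (-r) r ×ˢ Set.univ)
    with ht_def
  have ht_compact : IsCompact t :=
    ((isCompact_Icc.prod isCompact_univ).image (continuous_snd.prodMk hφ))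
  have ht : MeasurableSet t := ht_compact.isClosed.measurableSet
  have key := ProbabilityTheory.Kernel.measurable_kernel_prodMk_left_of_finite
    (κ := K) ht hfin
  convert key using 2 with x
  congr 1
  ext y
  simp only [ht_def, Set.mem_preimage, Set.mem_image, Set.mem_prod, Set.mem_univ, and_true,
    Prod.ext_iff, Prod.exists]
  constructor
  · rintro ⟨s, hs, rfl⟩
    exact ⟨s, x, hs, rfl, rfl⟩
  · rintro ⟨s, x', hs, rfl, rfl⟩
    exact ⟨s, hs, rfl⟩
end

section
/- Let ν be a Borel measure on ℝ that is finite on compact sets, nonatomic, invariant under the translation t ↦ t + 1, and satisfies ν([−1,1]) = 1. Suppose there exist Δ ∈ [0,∞) and a sequence (ε_k)_{k≥1} of positive real numbers with ε_k → 0 such that |ν([t − ε_k, t + ε_k])/ε_k − Δ| ≤ 1/k for every t ∈ ℝ and every k ≥ 1. Then ν([a, a + r]) = r/2 for every a ∈ ℝ and every r ≥ 0; equivalently, ν equals one half of Lebesgue measure on ℝ. -/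
open MeasureTheory Set Filter

lemma aux_half (ν : Measure ℝ)
    (hK : ∀ K : Set ℝ, IsCompact K → ν K < ⊤)
    (hna : ∀ t : ℝ, ν {t} = 0)
    (Δ : ℝ) (hΔ : 0 ≤ Δ)
    (ε : ℕ → ℝ) (hεpos : ∀ k : ℕ, 1 ≤ k → 0 < ε k)
    (hεlim : Filter.Tendsto ε Filter.atTop (nhds 0))
    (hdist : ∀ t : ℝ, ∀ k : ℕ, 1 ≤ k →
      |(ν (Set.Icc (t - ε k) (t + ε k))).toReal / ε k - Δ| ≤ 1 / (k : ℝ)) :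
    ∀ a r : ℝ, 0 ≤ r → (ν (Set.Icc a (a + r))).toReal = Δ * r / 2 := by
  have fin : ∀ a b : ℝ, ν (Set.Icc a b) ≠ ⊤ := fun a b => (hK _ isCompact_Icc).ne
  set g : ℝ → ℝ → ℝ := fun a b => (ν (Set.Icc a b)).toReal with hg
  have gadd : ∀ a b c : ℝ, a ≤ b → b ≤ c → g a c = g a b + g b c := by
    intro a b c hab hbc
    have hsplit : ν (Set.Icc a c) = ν (Set.Icc a b) + ν (Set.Icc b c) := by
      have hu : Set.Icc a b ∪ Set.Icc b c = Set.Icc a c := Set.Icc_union_Icc_eq_Icc hab hbc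
      have hi : Set.Icc a b ∩ Set.Icc b c = {b} := by
        rw [Set.Icc_inter_Icc]
        simp [max_eq_right hab, min_eq_left hbc, Set.Icc_self]
      have h := measure_union_add_inter (μ := ν) (Set.Icc a b) (measurableSet_Icc)
        (t := Set.Icc b c)
      rw [hu, hi, hna b, add_zero] at h
      exact h
    simp only [hg]
    rw [hsplit, ENNReal.toReal_add (fin a b) (fin b c)]
  have gmono : ∀ a b c : ℝ, b ≤ c → g a b ≤ g a c := by
    intro a b c hbc
    exact ENNReal.toReal_mono (fin a c) (measure_mono (Set.Icc_subset_Icc_right hbc))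
  have small : ∀ t : ℝ, ∀ k : ℕ, 1 ≤ k →
      ε k * (Δ - 1 / k) ≤ g (t - ε k) (t + ε k) ∧ g (t - ε k) (t + ε k) ≤ ε k * (Δ + 1 / k) := by
    intro t k hk
    have hε := hεpos k hk
    have h := abs_le.mp (hdist t k hk)
    constructor
    · have h1 := h.1
      have : Δ - 1 / k ≤ g (t - ε k) (t + ε k) / ε k := by linarith
      rw [le_div_iff₀ hε] at this
      linarith [this]
    · have h2 := h.2
      have : g (t - ε k) (t + ε k) / ε k ≤ Δ + 1 / k := by linarith
      rw [div_le_iff₀ hε] at this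
      linarith [this]
  have key : ∀ k : ℕ, 1 ≤ k → ∀ n : ℕ, ∀ a : ℝ,
      (n : ℝ) * (ε k * (Δ - 1 / k)) ≤ g a (a + n * (2 * ε k)) ∧
      g a (a + n * (2 * ε k)) ≤ (n : ℝ) * (ε k * (Δ + 1 / k)) := by
    intro k hk n a
    have hε := hεpos k hk
    induction n with
    | zero =>
      have h0 : g a a = 0 := by
        simp only [hg, Set.Icc_self, hna a, ENNReal.toReal_zero]
      simp [h0]
    | succ n ih =>
      have hn0 : (0 : ℝ) ≤ (n : ℝ) := Nat.cast_nonneg n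
      have h1 : a ≤ a + (n : ℝ) * (2 * ε k) := by nlinarith
      have h2 : a + (n : ℝ) * (2 * ε k) ≤ a + ((n : ℝ) + 1) * (2 * ε k) := by nlinarith
      set t : ℝ := a + (n : ℝ) * (2 * ε k) + ε k with ht
      have e1 : a + (n : ℝ) * (2 * ε k) = t - ε k := by rw [ht]; ring
      have e2 : a + ((n : ℝ) + 1) * (2 * ε k) = t + ε k := by rw [ht]; ring
      have hsm := small t k hk
      have hstep : g a (a + ((n : ℝ) + 1) * (2 * ε k)) =
          g a (a + (n : ℝ) * (2 * ε k)) + g (t - ε k) (t + ε k) := by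
        rw [← e1, ← e2]
        exact gadd a _ _ h1 h2
      push_cast
      rw [hstep]
      constructor
      · nlinarith [ih.1, hsm.1]
      · nlinarith [ih.2, hsm.2]
  -- main squeeze
  intro a r hr
  set L : ℝ := g a (a + r) with hL
  have hbounds : ∀ k : ℕ, 1 ≤ k →
      (r / 2 - ε k) * Δ - (r / 2) * (1 / k) ≤ L ∧ L ≤ (r / 2 + ε k) * (Δ + 1 / k) := by
    intro k hk
    have hε := hεpos k hk
    have hk1 : (1 : ℝ) ≤ (k : ℝ) := by exact_mod_cast hk
    set n : ℕ := ⌊r / (2 * ε k)⌋₊ with hn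
    have h2ε : (0 : ℝ) < 2 * ε k := by linarith
    have hfl : (n : ℝ) * (2 * ε k) ≤ r := by
      have := Nat.floor_le (show (0:ℝ) ≤ r / (2 * ε k) by positivity)
      calc (n : ℝ) * (2 * ε k) ≤ (r / (2 * ε k)) * (2 * ε k) := by
            apply mul_le_mul_of_nonneg_right this (le_of_lt h2ε)
        _ = r := by field_simp
    have hfl2 : r < ((n : ℝ) + 1) * (2 * ε k) := by
      have := Nat.lt_floor_add_one (r / (2 * ε k))
      calc r = (r / (2 * ε k)) * (2 * ε k) := by field_simp
        _ < ((n : ℝ) + 1) * (2 * ε k) := by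
            apply mul_lt_mul_of_pos_right this h2ε
    have hkey := key k hk n a
    have hkey2 := key k hk (n + 1) a
    have hmono1 : g a (a + (n : ℝ) * (2 * ε k)) ≤ L := by
      apply gmono; linarith
    have hmono2 : L ≤ g a (a + ((n : ℝ) + 1) * (2 * ε k)) := by
      apply gmono; linarith
    have hkey2' : g a (a + ((n : ℝ) + 1) * (2 * ε k)) ≤
        ((n : ℝ) + 1) * (ε k * (Δ + 1 / k)) := by
      have := hkey2.2
      push_cast at this
      convert this using 3 <;> ring
    have hnεle : (n : ℝ) * ε k ≤ r / 2 := by linarith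
    have hnεge : r / 2 - ε k ≤ (n : ℝ) * ε k := by nlinarith
    have hkpos : (0 : ℝ) < 1 / k := by positivity
    constructor
    · have := le_trans hkey.1 hmono1
      nlinarith
    · have := le_trans hmono2 hkey2'
      nlinarith
  -- limits
  have hlim1 : Tendsto (fun k : ℕ => (r / 2 - ε k) * Δ - (r / 2) * (1 / k)) atTop
      (nhds (Δ * r / 2)) := by
    have h1 : Tendsto (fun k : ℕ => (r / 2 - ε k) * Δ) atTop (nhds ((r / 2 - 0) * Δ)) :=
      ((tendsto_const_nhds.sub hεlim).mul tendsto_const_nhds)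
    have h2 : Tendsto (fun k : ℕ => (r / 2) * (1 / k)) atTop (nhds ((r / 2) * 0)) :=
      tendsto_const_nhds.mul tendsto_one_div_atTop_nhds_zero_nat
    have := h1.sub h2
    convert this using 2 <;> ring
  have hlim2 : Tendsto (fun k : ℕ => (r / 2 + ε k) * (Δ + 1 / k)) atTop
      (nhds (Δ * r / 2)) := by
    have h1 : Tendsto (fun k : ℕ => (r / 2 + ε k) * (Δ + 1 / k)) atTop
        (nhds ((r / 2 + 0) * (Δ + 0))) :=
      (tendsto_const_nhds.add hεlim).mul
        (tendsto_const_nhds.add tendsto_one_div_atTop_nhds_zero_nat)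
    convert h1 using 2
    ring
  have hle : Δ * r / 2 ≤ L :=
    le_of_tendsto hlim1 (Filter.eventually_atTop.mpr ⟨1, fun k hk => (hbounds k hk).1⟩)
  have hge : L ≤ Δ * r / 2 :=
    ge_of_tendsto hlim2 (Filter.eventually_atTop.mpr ⟨1, fun k hk => (hbounds k hk).2⟩)
  linarith

/-- A normalized translation-invariant nonatomic measure on `ℝ` with uniform
distortion along a sequence is half of Lebesgue measure: real-line model of the
lemma identifying the conditional measures with half arc-length. -/
theorem stmt_14
    (ν : Measure ℝ)
    (hK : ∀ K : Set ℝ, IsCompact K → ν K < ⊤)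
    (hna : ∀ t : ℝ, ν {t} = 0)
    (hinv : Measure.map (fun t : ℝ => t + 1) ν = ν)
    (hnorm : ν (Set.Icc (-1 : ℝ) 1) = 1)
    (Δ : ℝ) (hΔ : 0 ≤ Δ)
    (ε : ℕ → ℝ) (hεpos : ∀ k : ℕ, 1 ≤ k → 0 < ε k)
    (hεlim : Filter.Tendsto ε Filter.atTop (nhds 0))
    (hdist : ∀ t : ℝ, ∀ k : ℕ, 1 ≤ k →
      |(ν (Set.Icc (t - ε k) (t + ε k))).toReal / ε k - Δ| ≤ 1 / (k : ℝ)) :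
    (∀ a r : ℝ, 0 ≤ r → ν (Set.Icc a (a + r)) = ENNReal.ofReal (r / 2)) ∧
      ν = (2 : ENNReal)⁻¹ • MeasureTheory.volume := by
  have fin : ∀ a b : ℝ, ν (Set.Icc a b) ≠ ⊤ := fun a b => (hK _ isCompact_Icc).ne
  have main := aux_half ν hK hna Δ hΔ ε hεpos hεlim hdist
  have hΔ1 : Δ = 1 := by
    have h := main (-1) 2 (by norm_num)
    have he : (-1 : ℝ) + 2 = 1 := by norm_num
    rw [he, hnorm] at h
    simp at h
    linarith
  have hIcc : ∀ a r : ℝ, 0 ≤ r → ν (Set.Icc a (a + r)) = ENNReal.ofReal (r / 2) := by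
    intro a r hr
    have h := main a r hr
    rw [hΔ1, one_mul] at h
    rw [← ENNReal.ofReal_toReal (fin a (a + r)), h]
  refine ⟨hIcc, ?_⟩
  haveI : IsLocallyFiniteMeasure ν :=
    ⟨fun x => ⟨Set.Icc (x - 1) (x + 1),
      Icc_mem_nhds (by linarith) (by linarith), hK _ isCompact_Icc⟩⟩
  refine Measure.ext_of_Ioc ν _ (fun a b hab => ?_)
  have h1 : ν (Set.Ioc a b) = ν (Set.Icc a b) := by
    rw [← Set.Icc_diff_left]
    exact measure_diff_null (hna a)
  have h2 : ν (Set.Icc a b) = ENNReal.ofReal ((b - a) / 2) := by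
    have := hIcc a (b - a) (by linarith)
    rwa [show a + (b - a) = b by ring] at this
  rw [h1, h2]
  simp only [Measure.smul_apply, smul_eq_mul, Real.volume_Ioc]
  rw [ENNReal.ofReal_div_of_pos (by norm_num), div_eq_mul_inv, mul_comm]
  norm_num
end
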